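/- Let γ, δ ∈ (0,1]. For all sufficiently large primes p the following holds: suppose A, B ⊆ ℤ/pℤ with |A| = γp and |B| = δp, and suppose A contains exactly α·γ³·p² nontrivial 3APs and B contains exactly β·δ³·p² nontrivial 3APs. Then there exist residues u, v modulo p such that the set C = A ∩ (uB + v) satisfies |C| ≥ (1 − p^{−1/4}·γ^{−1}·δ^{−1/2})·γδp, and the number of nontrivial 3APs in C is less than α·β·(γδ)³·(p² + 2p^{3/2}). -/

import Mathlib

open Finset

set_option maxHeartbeats 1000000

/-- The number of nontrivial three-term arithmetic progressions in `S ⊆ ℤ/pℤ`, i.e. the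
number of ordered pairs `(n, m)` of residues with `m ≢ 0` and `n, n + m, n + 2m ∈ S`.
Such pairs are counted via the equivalent, bijective encoding `(n, m) ↦ (n, n + m)`,
a pair `(x, y) ∈ S × S` with `x ≠ y` and `n + 2m = 2y - x ∈ S`. -/
def nontrivialThreeAPCount {p : ℕ} (S : Finset (ZMod p)) : ℕ :=
  ((S ×ˢ S).filter fun q => 2 * q.2 - q.1 ∈ S ∧ q.1 ≠ q.2).card

namespace IRDT

variable {p : ℕ} [Fact p.Prime]

lemma core_count (x y : ZMod p) (hxy : x ≠ y) (Q : ZMod p × ZMod p → Prop) [DecidablePred Q] :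
    ((univ : Finset (ZMod p × ZMod p)).filter fun uv =>
        uv.1 ≠ 0 ∧ Q (uv.1⁻¹ * (x - uv.2), uv.1⁻¹ * (y - uv.2))).card =
    ((univ : Finset (ZMod p × ZMod p)).filter fun st => st.1 ≠ st.2 ∧ Q st).card := by
  have hxy' : x - y ≠ 0 := sub_ne_zero.2 hxy
  refine Finset.card_nbij' (fun uv => (uv.1⁻¹ * (x - uv.2), uv.1⁻¹ * (y - uv.2)))
    (fun st => ((x - y) * (st.1 - st.2)⁻¹, x - (x - y) * (st.1 - st.2)⁻¹ * st.1))
    ?_ ?_ ?_ ?_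
  · rintro ⟨u, v⟩ h
    simp only [mem_coe, mem_filter, mem_univ, true_and] at h ⊢
    obtain ⟨hu, hQ⟩ := h
    refine ⟨?_, hQ⟩
    intro heq
    exact hxy (sub_left_injective (mul_left_cancel₀ (inv_ne_zero hu) heq))
  · rintro ⟨s, t⟩ h
    simp only [mem_coe, mem_filter, mem_univ, true_and] at h ⊢
    obtain ⟨hst, hQ⟩ := h
    have hst' : s - t ≠ 0 := sub_ne_zero.2 hst
    have hu : (x - y) * (s - t)⁻¹ ≠ 0 := mul_ne_zero hxy' (inv_ne_zero hst')
    have h1 : ((x - y) * (s - t)⁻¹)⁻¹ * (x - (x - (x - y) * (s - t)⁻¹ * s)) = s := by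
      field_simp
      ring
    have h2 : ((x - y) * (s - t)⁻¹)⁻¹ * (y - (x - (x - y) * (s - t)⁻¹ * s)) = t := by
      field_simp
      ring
    rw [h1, h2]
    exact ⟨hu, hQ⟩
  · rintro ⟨u, v⟩ h
    simp only [mem_coe, mem_filter, mem_univ, true_and] at h
    obtain ⟨hu, -⟩ := h
    have key : u⁻¹ * (x - v) - u⁻¹ * (y - v) = u⁻¹ * (x - y) := by ring
    have h1 : (x - y) * (u⁻¹ * (x - v) - u⁻¹ * (y - v))⁻¹ = u := by
      rw [key]; field_simp
    refine Prod.ext ?_ ?_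
    · exact h1
    · show x - (x - y) * (u⁻¹ * (x - v) - u⁻¹ * (y - v))⁻¹ * (u⁻¹ * (x - v)) = v
      rw [h1]
      field_simp
      ring
  · rintro ⟨s, t⟩ h
    simp only [mem_coe, mem_filter, mem_univ, true_and] at h
    obtain ⟨hst, -⟩ := h
    have hst' : s - t ≠ 0 := sub_ne_zero.2 hst
    have hu : (x - y) * (s - t)⁻¹ ≠ 0 := mul_ne_zero hxy' (inv_ne_zero hst')
    refine Prod.ext ?_ ?_ <;> show _ = _
    · show ((x - y) * (s - t)⁻¹)⁻¹ * (x - (x - (x - y) * (s - t)⁻¹ * s)) = s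
      field_simp
      ring
    · show ((x - y) * (s - t)⁻¹)⁻¹ * (y - (x - (x - y) * (s - t)⁻¹ * s)) = t
      field_simp
      ring


lemma swap_count {α β : Type*} (s : Finset α) (t : Finset β)
    (R : α → β → Prop) [∀ a b, Decidable (R a b)] :
    ∑ a ∈ s, (t.filter fun b => R a b).card = ∑ b ∈ t, (s.filter fun a => R a b).card := by
  simp_rw [Finset.card_filter]
  exact Finset.sum_comm

lemma apcount_eq (S : Finset (ZMod p)) :
    nontrivialThreeAPCount S =
      ((univ : Finset (ZMod p × ZMod p)).filter fun q =>
        (q.1 ∈ S ∧ q.2 ∈ S ∧ 2 * q.2 - q.1 ∈ S) ∧ q.1 ≠ q.2).card := by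
  unfold nontrivialThreeAPCount
  congr 1
  ext q
  simp only [mem_filter, mem_product, mem_univ, true_and]
  tauto

lemma mem_image_affine {u v z : ZMod p} (hu : u ≠ 0) (B : Finset (ZMod p)) :
    (z ∈ B.image fun b => u * b + v) ↔ u⁻¹ * (z - v) ∈ B := by
  simp only [mem_image]
  constructor
  · rintro ⟨b, hb, rfl⟩
    have : u⁻¹ * (u * b + v - v) = b := by field_simp; ring
    rwa [this]
  · intro h
    exact ⟨_, h, by field_simp; ring⟩

lemma single_count (B : Finset (ZMod p)) (z : ZMod p) :
    ((univ : Finset (ZMod p × ZMod p)).filter fun uv =>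
        uv.1 ≠ 0 ∧ uv.1⁻¹ * (z - uv.2) ∈ B).card = (p - 1) * B.card := by
  rw [Finset.card_filter]
  rw [Fintype.sum_prod_type]
  have hinner : ∀ u : ZMod p, (∑ v : ZMod p,
      if u ≠ 0 ∧ u⁻¹ * (z - v) ∈ B then 1 else 0) = if u ≠ 0 then B.card else 0 := by
    intro u
    by_cases hu : u = 0
    · subst hu; simp
    · simp only [ne_eq, hu, not_false_eq_true, true_and, if_true]
      rw [← Finset.card_filter]
      apply Finset.card_nbij' (fun v => u⁻¹ * (z - v)) (fun b => z - u * b)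
      · intro v hv; simpa using (mem_filter.1 hv).2
      · intro b hb; simp only [mem_coe, mem_filter, mem_univ, true_and]
        have : u⁻¹ * (z - (z - u * b)) = b := by field_simp; ring
        rwa [this]
      · intro v _; field_simp; ring
      · intro b _; field_simp; ring
  rw [Finset.sum_congr rfl fun u _ => hinner u]
  rw [← Finset.sum_filter]
  rw [Finset.sum_const, smul_eq_mul]
  congr 1
  rw [Finset.filter_ne', Finset.card_erase_of_mem (mem_univ _), Finset.card_univ, ZMod.card]


lemma sum_card_inter (A B : Finset (ZMod p)) :
    ∑ uv ∈ (univ : Finset (ZMod p × ZMod p)).filter (fun uv => uv.1 ≠ 0),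
      (A ∩ B.image fun b => uv.1 * b + uv.2).card = (p - 1) * (A.card * B.card) := by
  have step1 : ∀ uv ∈ (univ : Finset (ZMod p × ZMod p)).filter
      (fun uv : ZMod p × ZMod p => uv.1 ≠ 0),
      (A ∩ B.image fun b => uv.1 * b + uv.2).card
        = (A.filter fun a => uv.1⁻¹ * (a - uv.2) ∈ B).card := by
    intro uv huv
    have hu : uv.1 ≠ 0 := (mem_filter.1 huv).2
    congr 1
    ext a
    simp only [mem_inter, mem_filter, mem_image_affine hu]
  rw [Finset.sum_congr rfl step1, swap_count]
  have inner : ∀ a ∈ A, ((((univ : Finset (ZMod p × ZMod p)).filter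
        (fun uv => uv.1 ≠ 0))).filter (fun uv => uv.1⁻¹ * (a - uv.2) ∈ B)).card
      = (p - 1) * B.card := by
    intro a _
    rw [Finset.filter_filter]
    exact single_count B a
  rw [Finset.sum_congr rfl inner, Finset.sum_const, smul_eq_mul]
  ring

lemma offdiag_eq (B : Finset (ZMod p)) :
    (univ : Finset (ZMod p × ZMod p)).filter (fun st => st.1 ≠ st.2 ∧ st.1 ∈ B ∧ st.2 ∈ B)
      = B.offDiag := by
  ext st
  simp only [mem_filter, mem_univ, true_and, Finset.mem_offDiag]
  tauto

lemma sum_sq_inter (A B : Finset (ZMod p)) :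
    ∑ uv ∈ (univ : Finset (ZMod p × ZMod p)).filter (fun uv => uv.1 ≠ 0),
      ((A ∩ B.image fun b => uv.1 * b + uv.2).card) ^ 2
    = A.card * ((p - 1) * B.card) + A.offDiag.card * B.offDiag.card := by
  have step1 : ∀ uv ∈ (univ : Finset (ZMod p × ZMod p)).filter
      (fun uv : ZMod p × ZMod p => uv.1 ≠ 0),
      ((A ∩ B.image fun b => uv.1 * b + uv.2).card) ^ 2
        = ((univ : Finset (ZMod p × ZMod p)).filter fun q =>
            (q.1 ∈ A ∧ q.2 ∈ A) ∧
              uv.1⁻¹ * (q.1 - uv.2) ∈ B ∧ uv.1⁻¹ * (q.2 - uv.2) ∈ B).card := by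
    intro uv huv
    have hu : uv.1 ≠ 0 := (mem_filter.1 huv).2
    rw [sq, ← Finset.card_product]
    congr 1
    ext q
    simp only [mem_product, mem_inter, mem_filter, mem_univ, true_and, mem_image_affine hu]
    tauto
  rw [Finset.sum_congr rfl step1, swap_count]
  have inner : ∀ q ∈ (univ : Finset (ZMod p × ZMod p)),
      (((univ : Finset (ZMod p × ZMod p)).filter (fun uv => uv.1 ≠ 0)).filter
        (fun uv => (q.1 ∈ A ∧ q.2 ∈ A) ∧
          uv.1⁻¹ * (q.1 - uv.2) ∈ B ∧ uv.1⁻¹ * (q.2 - uv.2) ∈ B)).card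
      = if q.1 ∈ A ∧ q.2 ∈ A then
          (if q.1 = q.2 then (p - 1) * B.card else B.offDiag.card) else 0 := by
    intro q _
    rw [Finset.filter_filter]
    by_cases hq : q.1 ∈ A ∧ q.2 ∈ A
    · rw [if_pos hq]
      by_cases hd : q.1 = q.2
      · rw [if_pos hd]
        have heq : ((univ : Finset (ZMod p × ZMod p)).filter fun uv => uv.1 ≠ 0 ∧
            ((q.1 ∈ A ∧ q.2 ∈ A) ∧
              uv.1⁻¹ * (q.1 - uv.2) ∈ B ∧ uv.1⁻¹ * (q.2 - uv.2) ∈ B))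
            = (univ : Finset (ZMod p × ZMod p)).filter
                (fun uv => uv.1 ≠ 0 ∧ uv.1⁻¹ * (q.1 - uv.2) ∈ B) := by
          apply Finset.filter_congr
          intro uv _
          have hab : uv.1⁻¹ * (q.1 - uv.2) = uv.1⁻¹ * (q.2 - uv.2) := by rw [hd]
          constructor
          · rintro ⟨h1, _, h3, _⟩; exact ⟨h1, h3⟩
          · rintro ⟨h1, h3⟩; exact ⟨h1, hq, h3, hab ▸ h3⟩
        rw [heq, single_count]
      · rw [if_neg hd]
        have heq : ((univ : Finset (ZMod p × ZMod p)).filter fun uv => uv.1 ≠ 0 ∧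
            ((q.1 ∈ A ∧ q.2 ∈ A) ∧
              uv.1⁻¹ * (q.1 - uv.2) ∈ B ∧ uv.1⁻¹ * (q.2 - uv.2) ∈ B))
            = (univ : Finset (ZMod p × ZMod p)).filter
                (fun uv => uv.1 ≠ 0 ∧ (fun st : ZMod p × ZMod p => st.1 ∈ B ∧ st.2 ∈ B)
                  (uv.1⁻¹ * (q.1 - uv.2), uv.1⁻¹ * (q.2 - uv.2))) := by
          apply Finset.filter_congr
          intro uv _
          simp only []
          tauto
        rw [heq, core_count q.1 q.2 hd (fun st : ZMod p × ZMod p => st.1 ∈ B ∧ st.2 ∈ B),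
          ← offdiag_eq B]
    · rw [if_neg hq]
      rw [Finset.card_eq_zero, Finset.filter_eq_empty_iff]
      intro uv _
      tauto
  rw [Finset.sum_congr rfl inner, ← Finset.sum_filter]
  have huniv : (univ : Finset (ZMod p × ZMod p)).filter (fun q => q.1 ∈ A ∧ q.2 ∈ A)
      = A ×ˢ A := by
    ext q; simp [mem_product]
  rw [huniv, Finset.sum_ite, Finset.sum_const, Finset.sum_const, smul_eq_mul, smul_eq_mul]
  have hdiag : ((A ×ˢ A).filter fun q => q.1 = q.2).card = A.card := by
    rw [show ((A ×ˢ A).filter fun q : ZMod p × ZMod p => q.1 = q.2) = A.diag from Finset.diag_eq_filter.symm,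
      Finset.diag_card]
  have hoff : ((A ×ˢ A).filter fun q : ZMod p × ZMod p => ¬ q.1 = q.2) = A.offDiag := by
    ext q; simp only [mem_filter, mem_product, mem_offDiag]; tauto
  rw [hdiag, hoff]

lemma sum_ap_inter (A B : Finset (ZMod p)) :
    ∑ uv ∈ (univ : Finset (ZMod p × ZMod p)).filter (fun uv => uv.1 ≠ 0),
      nontrivialThreeAPCount (A ∩ B.image fun b => uv.1 * b + uv.2)
    = nontrivialThreeAPCount A * nontrivialThreeAPCount B := by
  have step1 : ∀ uv ∈ (univ : Finset (ZMod p × ZMod p)).filter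
      (fun uv : ZMod p × ZMod p => uv.1 ≠ 0),
      nontrivialThreeAPCount (A ∩ B.image fun b => uv.1 * b + uv.2)
        = ((univ : Finset (ZMod p × ZMod p)).filter fun q =>
            ((q.1 ∈ A ∧ q.2 ∈ A ∧ 2 * q.2 - q.1 ∈ A) ∧ q.1 ≠ q.2) ∧
            (uv.1⁻¹ * (q.1 - uv.2) ∈ B ∧ uv.1⁻¹ * (q.2 - uv.2) ∈ B ∧
              2 * (uv.1⁻¹ * (q.2 - uv.2)) - uv.1⁻¹ * (q.1 - uv.2) ∈ B)).card := by
    intro uv huv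
    have hu : uv.1 ≠ 0 := (mem_filter.1 huv).2
    rw [apcount_eq]
    congr 1
    ext q
    have key : uv.1⁻¹ * (2 * q.2 - q.1 - uv.2) =
        2 * (uv.1⁻¹ * (q.2 - uv.2)) - uv.1⁻¹ * (q.1 - uv.2) := by ring
    simp only [mem_filter, mem_univ, true_and, mem_inter, mem_image_affine hu, key]
    tauto
  rw [Finset.sum_congr rfl step1, swap_count]
  have inner : ∀ q ∈ (univ : Finset (ZMod p × ZMod p)),
      (((univ : Finset (ZMod p × ZMod p)).filter (fun uv => uv.1 ≠ 0)).filter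
        (fun uv => ((q.1 ∈ A ∧ q.2 ∈ A ∧ 2 * q.2 - q.1 ∈ A) ∧ q.1 ≠ q.2) ∧
            (uv.1⁻¹ * (q.1 - uv.2) ∈ B ∧ uv.1⁻¹ * (q.2 - uv.2) ∈ B ∧
              2 * (uv.1⁻¹ * (q.2 - uv.2)) - uv.1⁻¹ * (q.1 - uv.2) ∈ B))).card
      = if (q.1 ∈ A ∧ q.2 ∈ A ∧ 2 * q.2 - q.1 ∈ A) ∧ q.1 ≠ q.2 then
          nontrivialThreeAPCount B else 0 := by
    intro q _
    rw [Finset.filter_filter]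
    by_cases hq : (q.1 ∈ A ∧ q.2 ∈ A ∧ 2 * q.2 - q.1 ∈ A) ∧ q.1 ≠ q.2
    · rw [if_pos hq]
      have heq : ((univ : Finset (ZMod p × ZMod p)).filter fun uv => uv.1 ≠ 0 ∧
          (((q.1 ∈ A ∧ q.2 ∈ A ∧ 2 * q.2 - q.1 ∈ A) ∧ q.1 ≠ q.2) ∧
            (uv.1⁻¹ * (q.1 - uv.2) ∈ B ∧ uv.1⁻¹ * (q.2 - uv.2) ∈ B ∧
              2 * (uv.1⁻¹ * (q.2 - uv.2)) - uv.1⁻¹ * (q.1 - uv.2) ∈ B)))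
          = (univ : Finset (ZMod p × ZMod p)).filter
              (fun uv => uv.1 ≠ 0 ∧ (fun st : ZMod p × ZMod p =>
                  st.1 ∈ B ∧ st.2 ∈ B ∧ 2 * st.2 - st.1 ∈ B)
                (uv.1⁻¹ * (q.1 - uv.2), uv.1⁻¹ * (q.2 - uv.2))) := by
        apply Finset.filter_congr
        intro uv _
        simp only []
        tauto
      rw [heq, core_count q.1 q.2 hq.2
        (fun st : ZMod p × ZMod p => st.1 ∈ B ∧ st.2 ∈ B ∧ 2 * st.2 - st.1 ∈ B)]
      rw [apcount_eq B]
      congr 1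
      ext st
      simp only [mem_filter, mem_univ, true_and]
      tauto
    · rw [if_neg hq]
      rw [Finset.card_eq_zero, Finset.filter_eq_empty_iff]
      intro uv _
      tauto
  rw [Finset.sum_congr rfl inner, ← Finset.sum_filter, Finset.sum_const, smul_eq_mul,
    ← apcount_eq]


lemma apcount_pos (γ : ℝ) (hγ0 : 0 < γ)
    (hbound : cornersTheoremBound γ ≤ p) (A : Finset (ZMod p))
    (hA : (A.card : ℝ) = γ * p) : 0 < nontrivialThreeAPCount A := by
  by_contra h0
  push_neg at h0
  have h0' : nontrivialThreeAPCount A = 0 := Nat.le_zero.1 h0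
  have hfree : ThreeAPFree (A : Set (ZMod p)) := by
    intro a ha b hb c hc habc
    by_contra hne
    simp only [Finset.mem_coe] at ha hb hc
    have hmem : (a, b) ∈ (A ×ˢ A).filter
        (fun q : ZMod p × ZMod p => 2 * q.2 - q.1 ∈ A ∧ q.1 ≠ q.2) := by
      refine Finset.mem_filter.2 ⟨Finset.mem_product.2 ⟨ha, hb⟩, ?_, hne⟩
      have h2 : 2 * b - a = c := by linear_combination -habc
      rw [h2]; exact hc
    have := Finset.card_pos.2 ⟨_, hmem⟩
    unfold nontrivialThreeAPCount at h0'
    omega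
  refine roth_3ap_theorem γ hγ0 ?_ A ?_ hfree
  · rwa [ZMod.card]
  · exact le_of_eq (by rw [ZMod.card, hA])

lemma b1_lemma (γ d q b1 : ℝ) (hγ0 : 0 < γ) (hγ1 : γ ≤ 1) (hd0 : 0 < d) (hq0 : 0 < q)
    (hq1 : 1 ≤ q ^ 4) (h1 : b1 * (d ^ 2 * q ^ 6) ≤ (q ^ 4 - 1) * (γ * q ^ 4 * (d ^ 2 * q ^ 4))) :
    b1 ≤ q ^ 6 := by
  have hpos : (0:ℝ) < d ^ 2 * q ^ 6 := by positivity
  have h2 : γ * (q ^ 4 - 1) ≤ q ^ 4 := by nlinarith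
  have h3 : (q ^ 4 - 1) * (γ * q ^ 4 * (d ^ 2 * q ^ 4)) ≤ q ^ 6 * (d ^ 2 * q ^ 6) := by
    have hh := mul_le_mul_of_nonneg_left h2 (show (0:ℝ) ≤ d ^ 2 * q ^ 8 by positivity)
    calc (q ^ 4 - 1) * (γ * q ^ 4 * (d ^ 2 * q ^ 4)) = d ^ 2 * q ^ 8 * (γ * (q ^ 4 - 1)) := by
          ring
      _ ≤ d ^ 2 * q ^ 8 * q ^ 4 := hh
      _ = q ^ 6 * (d ^ 2 * q ^ 6) := by ring
  exact le_of_mul_le_mul_right (le_trans h1 h3) hpos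

lemma b2_lemma (α β γ δ q b2 : ℝ) (hα : 0 < α) (hβ : 0 < β) (hγ0 : 0 < γ) (hδ0 : 0 < δ)
    (h1 : b2 * (α * β * (γ * δ) ^ 3 * (q ^ 8 + 2 * q ^ 6)) ≤
      (α * γ ^ 3 * q ^ 8) * (β * δ ^ 3 * q ^ 8)) :
    b2 * (q ^ 8 + 2 * q ^ 6) ≤ q ^ 16 := by
  have hk : (0:ℝ) < α * β * γ ^ 3 * δ ^ 3 := by positivity
  have h2 : (α * β * γ ^ 3 * δ ^ 3) * (b2 * (q ^ 8 + 2 * q ^ 6)) ≤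
      (α * β * γ ^ 3 * δ ^ 3) * q ^ 16 := by
    calc (α * β * γ ^ 3 * δ ^ 3) * (b2 * (q ^ 8 + 2 * q ^ 6))
        = b2 * (α * β * (γ * δ) ^ 3 * (q ^ 8 + 2 * q ^ 6)) := by ring
      _ ≤ (α * γ ^ 3 * q ^ 8) * (β * δ ^ 3 * q ^ 8) := h1
      _ = (α * β * γ ^ 3 * δ ^ 3) * q ^ 16 := by ring
  exact le_of_mul_le_mul_left h2 hk

lemma key1_lemma (γ δ P : ℝ) (hγ0 : 0 < γ) (hδ1 : δ ≤ 1) (hP0 : 0 < P)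
    (hδP1 : 1 ≤ δ * P) : (γ * P - 1) * (δ * P - 1) ≤ γ * δ * P * (P - 1) := by
  nlinarith [mul_nonneg (sub_nonneg.2 hδ1) (mul_pos hγ0 hP0).le]

lemma final_lemma (q b1 b2 : ℝ) (hq0 : 0 < q) (hq2 : 4 ≤ q ^ 2) (hb1 : b1 ≤ q ^ 6)
    (hb2 : b2 * (q ^ 8 + 2 * q ^ 6) ≤ q ^ 16) (hb2n : 0 ≤ b2) :
    b1 + b2 < (q ^ 4 - 1) * q ^ 4 := by
  have h6 : (0:ℝ) < q ^ 8 + 2 * q ^ 6 := by positivity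
  have h10 : (0:ℝ) < q ^ 10 := by positivity
  have hkey : 2 * q ^ 10 ≤ q ^ 10 * (q ^ 4 - 3 * q ^ 2 - 2) := by
    have h1 : 4 * q ^ 2 ≤ q ^ 4 := by nlinarith [sq_nonneg q]
    nlinarith [h10, hq2]
  nlinarith [hb1, hb2, h6, hkey, h10, mul_pos h6 h10]


end IRDT

open IRDT

/-- Let `γ, δ ∈ (0,1]`. For all sufficiently large primes `p`: if `A, B ⊆ ℤ/pℤ` with
`|A| = γp`, `|B| = δp`, `A` contains exactly `αγ³p²` nontrivial 3APs and `B` contains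
exactly `βδ³p²` nontrivial 3APs, then there are residues `u, v` such that
`C = A ∩ (uB + v)` satisfies `|C| ≥ (1 - p^{-1/4} γ⁻¹ δ^{-1/2}) γδp` and `C` has fewer
than `αβ(γδ)³(p² + 2p^{3/2})` nontrivial 3APs. -/
theorem intersect_random_dilate_translate (γ δ : ℝ) (hγ0 : 0 < γ) (hγ1 : γ ≤ 1)
    (hδ0 : 0 < δ) (hδ1 : δ ≤ 1) :
    ∃ p₀ : ℕ, ∀ p : ℕ, p.Prime → p₀ ≤ p →
      ∀ (A B : Finset (ZMod p)) (α β : ℝ),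
        (A.card : ℝ) = γ * p → (B.card : ℝ) = δ * p →
        (nontrivialThreeAPCount A : ℝ) = α * γ ^ 3 * (p : ℝ) ^ 2 →
        (nontrivialThreeAPCount B : ℝ) = β * δ ^ 3 * (p : ℝ) ^ 2 →
        ∃ u v : ZMod p,
          ((A ∩ B.image fun b => u * b + v).card : ℝ) ≥
            (1 - (p : ℝ) ^ (-(1 : ℝ) / 4) * γ⁻¹ * δ ^ (-(1 : ℝ) / 2)) * (γ * δ * p) ∧
          (nontrivialThreeAPCount (A ∩ B.image fun b => u * b + v) : ℝ) <
            α * β * (γ * δ) ^ 3 * ((p : ℝ) ^ 2 + 2 * (p : ℝ) ^ ((3 : ℝ) / 2)) := by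
  classical
  refine ⟨max (cornersTheoremBound γ) (cornersTheoremBound δ) + 17, ?_⟩
  intro p hp hp₀ A B α β hA hB hTA hTB
  haveI : Fact p.Prime := ⟨hp⟩
  have hp17 : 17 ≤ p := le_trans (Nat.le_add_left _ _) hp₀
  have hP0 : (0:ℝ) < (p:ℝ) := by exact_mod_cast Nat.pos_of_ne_zero (by omega)
  have hP16 : (16:ℝ) ≤ (p:ℝ) := by
    have h17 : ((16:ℕ):ℝ) ≤ (p:ℝ) := Nat.cast_le.mpr (by omega)
    simpa using h17
  -- α, β positive
  have hTApos : 0 < nontrivialThreeAPCount A :=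
    apcount_pos γ hγ0 (le_trans (le_trans (le_max_left _ _) (Nat.le_add_right _ _)) hp₀) A hA
  have hTBpos : 0 < nontrivialThreeAPCount B :=
    apcount_pos δ hδ0 (le_trans (le_trans (le_max_right _ _) (Nat.le_add_right _ _)) hp₀) B hB
  have hα : 0 < α := by
    have h1 : (0:ℝ) < (nontrivialThreeAPCount A : ℝ) := by exact_mod_cast hTApos
    rw [hTA] at h1
    nlinarith [mul_pos (pow_pos hγ0 3) (pow_pos hP0 2)]
  have hβ : 0 < β := by
    have h1 : (0:ℝ) < (nontrivialThreeAPCount B : ℝ) := by exact_mod_cast hTBpos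
    rw [hTB] at h1
    nlinarith [mul_pos (pow_pos hδ0 3) (pow_pos hP0 2)]
  -- card bounds
  have hA1 : 0 < A.card := by
    rcases Nat.eq_zero_or_pos A.card with h | h
    · rw [h] at hA; exact absurd hA.symm (by push_cast; exact ne_of_gt (mul_pos hγ0 hP0))
    · exact h
  have hB1 : 0 < B.card := by
    rcases Nat.eq_zero_or_pos B.card with h | h
    · rw [h] at hB; exact absurd hB.symm (by push_cast; exact ne_of_gt (mul_pos hδ0 hP0))
    · exact h
  have hγP1 : 1 ≤ γ * (p:ℝ) := by rw [← hA]; exact_mod_cast hA1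
  have hδP1 : 1 ≤ δ * (p:ℝ) := by rw [← hB]; exact_mod_cast hB1
  -- rpow bookkeeping
  set q : ℝ := (p:ℝ) ^ ((1:ℝ)/4) with hqdef
  have hq0 : 0 < q := Real.rpow_pos_of_pos hP0 _
  have hq4 : q ^ 4 = (p:ℝ) := by
    rw [hqdef, ← Real.rpow_natCast ((p:ℝ) ^ ((1:ℝ)/4)) 4, ← Real.rpow_mul hP0.le]
    norm_num
  have hq6 : (p:ℝ) ^ ((3:ℝ)/2) = q ^ 6 := by
    rw [hqdef, ← Real.rpow_natCast ((p:ℝ) ^ ((1:ℝ)/4)) 6, ← Real.rpow_mul hP0.le]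
    norm_num
  have hqi : (p:ℝ) ^ (-(1:ℝ)/4) = q⁻¹ := by
    rw [show -(1:ℝ)/4 = -((1:ℝ)/4) by norm_num, Real.rpow_neg hP0.le, hqdef]
  set d : ℝ := δ ^ ((1:ℝ)/2) with hddef
  have hd0 : 0 < d := Real.rpow_pos_of_pos hδ0 _
  have hd2 : d ^ 2 = δ := by
    rw [hddef, ← Real.rpow_natCast (δ ^ ((1:ℝ)/2)) 2, ← Real.rpow_mul hδ0.le]
    norm_num
  have hdi : δ ^ (-(1:ℝ)/2) = d⁻¹ := by
    rw [show -(1:ℝ)/2 = -((1:ℝ)/2) by norm_num, Real.rpow_neg hδ0.le, hddef]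
  have hq2 : (4:ℝ) ≤ q^2 := by nlinarith [hq4, hP16, hq0.le, sq_nonneg q]
  have hεb : ((p:ℝ) ^ (-(1:ℝ)/4) * γ⁻¹ * δ ^ (-(1:ℝ)/2)) * (γ * δ * (p:ℝ)) = d * q^3 := by
    rw [hqi, hdi, ← hq4, ← hd2]
    field_simp
  -- the probability space
  set Ω : Finset (ZMod p × ZMod p) :=
    (univ : Finset (ZMod p × ZMod p)).filter (fun uv => uv.1 ≠ 0) with hΩdef
  have hΩcard : Ω.card = (p - 1) * p := by
    have hsplit : Ω = ((univ : Finset (ZMod p)).filter (fun u => u ≠ 0)) ×ˢ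
        (univ : Finset (ZMod p)) := by
      ext uv
      simp [hΩdef, Finset.mem_product]
    rw [hsplit, Finset.card_product, Finset.filter_ne', Finset.card_erase_of_mem (mem_univ _),
      Finset.card_univ, ZMod.card]
  have hPm1 : ((p - 1 : ℕ) : ℝ) = (p:ℝ) - 1 := by
    rw [Nat.cast_sub (by omega)]
    norm_num
  have hΩcardR : ((Ω.card : ℕ) : ℝ) = ((p:ℝ) - 1) * (p:ℝ) := by
    rw [hΩcard, Nat.cast_mul, hPm1]
  -- cast the three identities to ℝ
  have S1R : ∑ uv ∈ Ω, ((A ∩ B.image fun b => uv.1 * b + uv.2).card : ℝ)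
      = ((p:ℝ) - 1) * (γ * (p:ℝ) * (δ * (p:ℝ))) := by
    rw [← Nat.cast_sum, sum_card_inter A B, Nat.cast_mul, Nat.cast_mul, hPm1, hA, hB]
  have hoffA : ((A.offDiag.card : ℕ) : ℝ) = (γ * (p:ℝ))^2 - γ * (p:ℝ) := by
    rw [Finset.offDiag_card, Nat.cast_sub (Nat.le_mul_of_pos_left _ hA1), Nat.cast_mul, hA]
    ring
  have hoffB : ((B.offDiag.card : ℕ) : ℝ) = (δ * (p:ℝ))^2 - δ * (p:ℝ) := by
    rw [Finset.offDiag_card, Nat.cast_sub (Nat.le_mul_of_pos_left _ hB1), Nat.cast_mul, hB]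
    ring
  have S2R : ∑ uv ∈ Ω, ((A ∩ B.image fun b => uv.1 * b + uv.2).card : ℝ)^2
      = γ * (p:ℝ) * (((p:ℝ) - 1) * (δ * (p:ℝ)))
        + ((γ * (p:ℝ))^2 - γ * (p:ℝ)) * ((δ * (p:ℝ))^2 - δ * (p:ℝ)) := by
    have := congrArg (fun n : ℕ => (n : ℝ)) (sum_sq_inter A B)
    push_cast at this
    rw [hPm1, hA, hB, hoffA, hoffB] at this
    exact this
  have STR : ∑ uv ∈ Ω, (nontrivialThreeAPCount (A ∩ B.image fun b => uv.1 * b + uv.2) : ℝ)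
      = (α * γ ^ 3 * (p:ℝ) ^ 2) * (β * δ ^ 3 * (p:ℝ) ^ 2) := by
    rw [← Nat.cast_sum, sum_ap_inter A B, Nat.cast_mul, hTA, hTB]
  -- bad events
  set bad1 : Finset (ZMod p × ZMod p) := Ω.filter (fun uv =>
      ((A ∩ B.image fun b => uv.1 * b + uv.2).card : ℝ) <
        (1 - (p : ℝ) ^ (-(1 : ℝ) / 4) * γ⁻¹ * δ ^ (-(1 : ℝ) / 2)) * (γ * δ * (p:ℝ))) with hbad1
  set bad2 : Finset (ZMod p × ZMod p) := Ω.filter (fun uv =>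
      α * β * (γ * δ) ^ 3 * ((p : ℝ) ^ 2 + 2 * (p : ℝ) ^ ((3 : ℝ) / 2)) ≤
        (nontrivialThreeAPCount (A ∩ B.image fun b => uv.1 * b + uv.2) : ℝ)) with hbad2
  -- Chebyshev bound on bad1
  have cheb1 : (bad1.card : ℝ) * (d^2 * q^6) ≤
      ∑ uv ∈ Ω, (((A ∩ B.image fun b => uv.1 * b + uv.2).card : ℝ) - γ * δ * (p:ℝ))^2 := by
    have hstep : ∀ uv ∈ bad1,
        d^2 * q^6 ≤ (((A ∩ B.image fun b => uv.1 * b + uv.2).card : ℝ) - γ * δ * (p:ℝ))^2 := by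
      intro uv huv
      have hlt := (Finset.mem_filter.1 huv).2
      have hc0 : (0:ℝ) ≤ ((A ∩ B.image fun b => uv.1 * b + uv.2).card : ℝ) := Nat.cast_nonneg _
      have hlt' : ((A ∩ B.image fun b => uv.1 * b + uv.2).card : ℝ) <
          γ * δ * (p:ℝ) - d * q^3 := by
        have h1 : (1 - (p : ℝ) ^ (-(1 : ℝ) / 4) * γ⁻¹ * δ ^ (-(1 : ℝ) / 2)) * (γ * δ * (p:ℝ))
            = γ * δ * (p:ℝ) - d * q^3 := by
          rw [sub_mul, one_mul, hεb]
        linarith [hlt, h1.symm.le, h1.le]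
      have hdq : (0:ℝ) < d * q^3 := by positivity
      have h2 : d * q^3 ≤ γ * δ * (p:ℝ) - ((A ∩ B.image fun b => uv.1 * b + uv.2).card : ℝ) := by
        linarith
      have h3 := pow_le_pow_left₀ hdq.le h2 2
      calc d^2 * q^6 = (d * q^3)^2 := by ring
        _ ≤ (γ * δ * (p:ℝ) - ((A ∩ B.image fun b => uv.1 * b + uv.2).card : ℝ))^2 := h3
        _ = (((A ∩ B.image fun b => uv.1 * b + uv.2).card : ℝ) - γ * δ * (p:ℝ))^2 := by ring
    calc (bad1.card : ℝ) * (d^2 * q^6)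
        ≤ ∑ uv ∈ bad1, (((A ∩ B.image fun b => uv.1 * b + uv.2).card : ℝ) - γ * δ * (p:ℝ))^2 := by
          have := Finset.card_nsmul_le_sum bad1 _ _ hstep
          rwa [nsmul_eq_mul] at this
      _ ≤ ∑ uv ∈ Ω, (((A ∩ B.image fun b => uv.1 * b + uv.2).card : ℝ) - γ * δ * (p:ℝ))^2 := by
          apply Finset.sum_le_sum_of_subset_of_nonneg (Finset.filter_subset _ _)
          intro uv _ _
          exact sq_nonneg _
  -- variance bound
  have hsplitV : ∑ uv ∈ Ω, (((A ∩ B.image fun b => uv.1 * b + uv.2).card : ℝ) - γ * δ * (p:ℝ))^2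
      = (∑ uv ∈ Ω, ((A ∩ B.image fun b => uv.1 * b + uv.2).card : ℝ)^2)
        - 2 * (γ * δ * (p:ℝ)) * (∑ uv ∈ Ω, ((A ∩ B.image fun b => uv.1 * b + uv.2).card : ℝ))
        + (Ω.card : ℝ) * (γ * δ * (p:ℝ))^2 := by
    have hterm : ∀ uv ∈ Ω,
        (((A ∩ B.image fun b => uv.1 * b + uv.2).card : ℝ) - γ * δ * (p:ℝ))^2
          = ((A ∩ B.image fun b => uv.1 * b + uv.2).card : ℝ)^2
            - 2 * (γ * δ * (p:ℝ)) * ((A ∩ B.image fun b => uv.1 * b + uv.2).card : ℝ)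
            + (γ * δ * (p:ℝ))^2 := fun uv _ => by ring
    rw [Finset.sum_congr rfl hterm, Finset.sum_add_distrib, Finset.sum_sub_distrib,
      ← Finset.mul_sum, Finset.sum_const, nsmul_eq_mul]
  have key1 : (γ * (p:ℝ) - 1) * (δ * (p:ℝ) - 1) ≤ γ * δ * (p:ℝ) * ((p:ℝ) - 1) := by
    exact key1_lemma γ δ (p:ℝ) hγ0 hδ1 hP0 hδP1
  have key2 : ((γ * (p:ℝ))^2 - γ * (p:ℝ)) * ((δ * (p:ℝ))^2 - δ * (p:ℝ))
      ≤ γ^2 * δ^2 * (p:ℝ)^3 * ((p:ℝ) - 1) := by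
    have h := mul_le_mul_of_nonneg_left key1 (show (0:ℝ) ≤ γ * δ * (p:ℝ)^2 by positivity)
    calc ((γ * (p:ℝ))^2 - γ * (p:ℝ)) * ((δ * (p:ℝ))^2 - δ * (p:ℝ))
        = γ * δ * (p:ℝ)^2 * ((γ * (p:ℝ) - 1) * (δ * (p:ℝ) - 1)) := by ring
      _ ≤ γ * δ * (p:ℝ)^2 * (γ * δ * (p:ℝ) * ((p:ℝ) - 1)) := h
      _ = γ^2 * δ^2 * (p:ℝ)^3 * ((p:ℝ) - 1) := by ring
  have hVle : ∑ uv ∈ Ω, (((A ∩ B.image fun b => uv.1 * b + uv.2).card : ℝ) - γ * δ * (p:ℝ))^2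
      ≤ ((p:ℝ) - 1) * (γ * (p:ℝ) * (δ * (p:ℝ))) := by
    rw [hsplitV, S1R, S2R, hΩcardR]
    linarith [key2]
  -- Markov
  have mark : (bad2.card : ℝ) *
      (α * β * (γ * δ) ^ 3 * ((p : ℝ) ^ 2 + 2 * (p : ℝ) ^ ((3 : ℝ) / 2)))
      ≤ ∑ uv ∈ Ω, (nontrivialThreeAPCount (A ∩ B.image fun b => uv.1 * b + uv.2) : ℝ) := by
    calc (bad2.card : ℝ) *
        (α * β * (γ * δ) ^ 3 * ((p : ℝ) ^ 2 + 2 * (p : ℝ) ^ ((3 : ℝ) / 2)))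
        ≤ ∑ uv ∈ bad2, (nontrivialThreeAPCount (A ∩ B.image fun b => uv.1 * b + uv.2) : ℝ) := by
          have hh := Finset.card_nsmul_le_sum bad2 _ _
            (fun uv huv => (Finset.mem_filter.1 huv).2)
          rwa [nsmul_eq_mul] at hh
      _ ≤ _ := Finset.sum_le_sum_of_subset_of_nonneg (Finset.filter_subset _ _)
          (fun uv _ _ => Nat.cast_nonneg _)
  have hP2 : (p:ℝ) ^ 2 = q ^ 8 := by rw [← hq4]; ring
  have hq1 : (1:ℝ) ≤ q ^ 4 := by
    rw [hq4]
    exact_mod_cast Nat.one_le_iff_ne_zero.2 (by omega)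
  have hb1q : (bad1.card : ℝ) ≤ q ^ 6 := by
    have h1 : (bad1.card : ℝ) * (d ^ 2 * q ^ 6) ≤ ((p:ℝ) - 1) * (γ * (p:ℝ) * (δ * (p:ℝ))) :=
      le_trans cheb1 hVle
    rw [← hq4, ← hd2] at h1
    exact b1_lemma γ d q _ hγ0 hγ1 hd0 hq0 hq1 h1
  have hb2q : (bad2.card : ℝ) * (q ^ 8 + 2 * q ^ 6) ≤ q ^ 16 := by
    have h1 := le_trans mark (le_of_eq STR)
    rw [hP2, hq6] at h1
    exact b2_lemma α β γ δ q _ hα hβ hγ0 hδ0 h1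
  have hfin : (bad1.card : ℝ) + (bad2.card : ℝ) < ((Ω.card : ℕ) : ℝ) := by
    rw [hΩcardR, ← hq4]
    exact final_lemma q _ _ hq0 hq2 hb1q hb2q (Nat.cast_nonneg _)
  have hcard : bad1.card + bad2.card < Ω.card := by exact_mod_cast hfin
  have hnot : ¬ Ω ⊆ bad1 ∪ bad2 := by
    intro hsub
    have h1 := Finset.card_le_card hsub
    have h2 := Finset.card_union_le bad1 bad2
    omega
  obtain ⟨uv, huvΩ, huvbad⟩ := Finset.not_subset.1 hnot
  refine ⟨uv.1, uv.2, ?_, ?_⟩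
  · by_contra hcon
    push_neg at hcon
    exact huvbad (Finset.mem_union_left _ (Finset.mem_filter.2 ⟨huvΩ, hcon⟩))
  · by_contra hcon
    push_neg at hcon
    exact huvbad (Finset.mem_union_right _ (Finset.mem_filter.2 ⟨huvΩ, hcon⟩))
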